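/- Let d ≥ 1 and for each r > 0 let F_r : (0,r) → [0,∞) be measurable and satisfy the normalization ⨍_{B_r} |ξ| F_r(|ξ|) dξ = d·r. Let v : ℝ^d → ℝ be continuously differentiable and bounded. Then for every x ∈ ℝ^d, (T_r ∇v)(x) converges to ∇v(x) as r → 0⁺. -/

import Mathlib

/-!
For a radial weight `w` and a measure invariant under the coordinate reflections and
permutations, the second-moment matrix `∫ ξ ξᵀ w(‖ξ‖)` is scalar, so
`⨍ ⟪a, ξ⟫ ξ F(‖ξ‖)/‖ξ‖ = d⁻¹ (⨍ ‖ξ‖ F(‖ξ‖)) a = r a`: by the normalisation of `F` the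
operator is exact on constant gradients. Subtracting this identity with `a = ∇v(x)`, the
error `T_r ∇v(x) - ∇v(x)` only sees `∇v(x + sξ) - ∇v(x)` for `ξ ∈ B_r`, and, as `F ≥ 0`,
the same normalisation bounds it by `d · sup_{B_r(x)} ‖∇v - ∇v(x)‖`, which tends to `0` by
continuity of `∇v`.
-/

open MeasureTheory Metric Filter

/-- The operator `(T_r ∇v)(x) = (1/r) ∫_0^1 ⨍_{B_r} (∇v(x+sξ)·ξ) (ξ/‖ξ‖) F_r(‖ξ‖) dξ ds`. -/
noncomputable def TgradOp (d : ℕ) (r : ℝ) (Fr : ℝ → ℝ)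
    (v : EuclideanSpace ℝ (Fin d) → ℝ) (x : EuclideanSpace ℝ (Fin d)) :
    EuclideanSpace ℝ (Fin d) :=
  r⁻¹ • ∫ s in (0:ℝ)..1,
    ⨍ ξ in ball (0 : EuclideanSpace ℝ (Fin d)) r,
      ((inner ℝ (gradient v (x + s • ξ)) ξ : ℝ) * Fr ‖ξ‖ / ‖ξ‖) • ξ

open scoped RealInnerProductSpace

lemma norm_inner_mul_smul_le_of_norm_le {E : Type*} [NormedAddCommGroup E] [InnerProductSpace ℝ E]
    {a : E} {C : ℝ} (ha : ‖a‖ ≤ C) (ξ : E) (c : ℝ) :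
    ‖(⟪a, ξ⟫ * c) • ξ‖ ≤ C * (‖ξ‖ ^ 2 * |c|) := by
  rw [norm_smul, norm_mul, Real.norm_eq_abs, Real.norm_eq_abs]
  calc |⟪a, ξ⟫| * |c| * ‖ξ‖ ≤ ‖a‖ * ‖ξ‖ * |c| * ‖ξ‖ := by
        gcongr; exact abs_real_inner_le_norm a ξ
    _ = ‖a‖ * (‖ξ‖ ^ 2 * |c|) := by ring
    _ ≤ C * (‖ξ‖ ^ 2 * |c|) := by gcongr

lemma norm_inv_smul_intervalIntegral_sub_le {E : Type*} [NormedAddCommGroup E] [NormedSpace ℝ E]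
    [CompleteSpace E] {A : ℝ → E} {c : E} {r K : ℝ} (hr : 0 < r)
    (hA : IntervalIntegrable A volume 0 1)
    (hAc : ∀ s ∈ Set.Icc (0 : ℝ) 1, ‖A s - r • c‖ ≤ r * K) :
    ‖r⁻¹ • (∫ s in (0 : ℝ)..1, A s) - c‖ ≤ K := by
  have hsub : r⁻¹ • (∫ s in (0 : ℝ)..1, A s) - c = r⁻¹ • ∫ s in (0 : ℝ)..1, (A s - r • c) := by
    rw [intervalIntegral.integral_sub hA intervalIntegrable_const, intervalIntegral.integral_const,
      sub_zero, one_smul, smul_sub, smul_smul, inv_mul_cancel₀ hr.ne', one_smul]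
  have hbound := intervalIntegral.norm_integral_le_of_norm_le_const fun s hs =>
    hAc s (Set.Ioc_subset_Icc_self (by rwa [Set.uIoc_of_le zero_le_one] at hs))
  rw [hsub, norm_smul, Real.norm_of_nonneg (inv_nonneg.mpr hr.le)]
  calc r⁻¹ * ‖∫ s in (0 : ℝ)..1, (A s - r • c)‖ ≤ r⁻¹ * (r * K * |1 - 0|) := by gcongr
    _ = K := by field_simp; simp

lemma add_smul_mem_ball {E : Type*} [SeminormedAddCommGroup E] [NormedSpace ℝ E] {x ξ : E}
    {r s : ℝ} (hξ : ξ ∈ ball 0 r) (hs : s ∈ Set.Icc (0 : ℝ) 1) : x + s • ξ ∈ ball x r := by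
  rw [mem_ball_iff_norm, add_sub_cancel_left, norm_smul, Real.norm_of_nonneg hs.1]
  exact (mul_le_of_le_one_left (norm_nonneg ξ) hs.2).trans_lt (mem_ball_zero_iff.mp hξ)

section RadialMoments

variable {ι : Type*} [Fintype ι] {μ : Measure (EuclideanSpace ℝ ι)} {w : ℝ → ℝ}

noncomputable def coordReflection [DecidableEq ι] (i : ι) :
    EuclideanSpace ℝ ι ≃ₗᵢ[ℝ] EuclideanSpace ℝ ι :=
  LinearIsometryEquiv.piLpCongrRight 2 fun k => if k = i then .neg ℝ else .refl ℝ ℝ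

lemma coordReflection_apply [DecidableEq ι] (i k : ι) (ξ : EuclideanSpace ℝ ι) :
    coordReflection i ξ k = if k = i then -ξ k else ξ k := by
  by_cases h : k = i <;> simp [coordReflection, h]

lemma integral_comp_linearIsometryEquiv {F : Type*} [NormedAddCommGroup F] [NormedSpace ℝ F]
    (e : EuclideanSpace ℝ ι ≃ₗᵢ[ℝ] EuclideanSpace ℝ ι) (he : MeasurePreserving e μ μ)
    (g : EuclideanSpace ℝ ι → F) : ∫ ξ, g (e ξ) ∂μ = ∫ ξ, g ξ ∂μ :=
  he.integral_comp e.toHomeomorph.measurableEmbedding g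

lemma integral_apply_mul_apply_mul_radial_eq_zero [DecidableEq ι]
    (hμ : ∀ e : EuclideanSpace ℝ ι ≃ₗᵢ[ℝ] EuclideanSpace ℝ ι, MeasurePreserving e μ μ)
    {i k : ι} (hik : i ≠ k) : ∫ ξ, ξ i * ξ k * w ‖ξ‖ ∂μ = 0 := by
  have h := integral_comp_linearIsometryEquiv _ (hμ (coordReflection i))
    fun ξ => ξ i * ξ k * w ‖ξ‖
  simp only [coordReflection_apply, ↓reduceIte, if_neg hik.symm,
    LinearIsometryEquiv.norm_map, neg_mul, integral_neg] at h
  exact eq_zero_of_neg_eq h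

lemma integral_sq_apply_mul_radial_eq [DecidableEq ι]
    (hμ : ∀ e : EuclideanSpace ℝ ι ≃ₗᵢ[ℝ] EuclideanSpace ℝ ι, MeasurePreserving e μ μ)
    (i k : ι) : ∫ ξ, ξ i ^ 2 * w ‖ξ‖ ∂μ = ∫ ξ, ξ k ^ 2 * w ‖ξ‖ ∂μ := by
  have h := integral_comp_linearIsometryEquiv _
    (hμ (.piLpCongrLeft 2 ℝ ℝ (Equiv.swap i k))) fun ξ => ξ i ^ 2 * w ‖ξ‖
  simpa [LinearIsometryEquiv.piLpCongrLeft_apply, Equiv.piCongrLeft'_apply] using h.symm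

lemma integrable_apply_mul_apply_mul_radial (hw : Measurable w)
    (hint : Integrable (fun ξ => ‖ξ‖ ^ 2 * w ‖ξ‖) μ) (i k : ι) :
    Integrable (fun ξ : EuclideanSpace ℝ ι => ξ i * ξ k * w ‖ξ‖) μ := by
  refine hint.mono (by fun_prop) (ae_of_all _ fun ξ => ?_)
  simp only [norm_mul, norm_norm, sq]
  gcongr <;> exact PiLp.norm_apply_le ξ _

lemma integrable_sq_norm_mul_abs_radial (hint : Integrable (fun ξ => ‖ξ‖ ^ 2 * w ‖ξ‖) μ) :
    Integrable (fun ξ : EuclideanSpace ℝ ι => ‖ξ‖ ^ 2 * |w ‖ξ‖|) μ :=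
  hint.abs.congr (ae_of_all _ fun ξ => by simp [abs_mul])

lemma aestronglyMeasurable_inner_mul_radial_smul {g : EuclideanSpace ℝ ι → EuclideanSpace ℝ ι}
    (hw : Measurable w) (hg : AEStronglyMeasurable g μ) :
    AEStronglyMeasurable (fun ξ => (⟪g ξ, ξ⟫ * w ‖ξ‖) • ξ) μ :=
  ((hg.inner aestronglyMeasurable_id).mul (hw.comp measurable_norm).aestronglyMeasurable).smul
    aestronglyMeasurable_id

lemma integrable_inner_mul_radial_smul {g : EuclideanSpace ℝ ι → EuclideanSpace ℝ ι} {C : ℝ}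
    (hw : Measurable w) (hint : Integrable (fun ξ => ‖ξ‖ ^ 2 * w ‖ξ‖) μ)
    (hg : AEStronglyMeasurable g μ) (hgC : ∀ᵐ ξ ∂μ, ‖g ξ‖ ≤ C) :
    Integrable (fun ξ => (⟪g ξ, ξ⟫ * w ‖ξ‖) • ξ) μ :=
  ((integrable_sq_norm_mul_abs_radial hint).const_mul C).mono'
    (aestronglyMeasurable_inner_mul_radial_smul hw hg)
    (hgC.mono fun ξ h => norm_inner_mul_smul_le_of_norm_le h ξ _)

lemma norm_integral_inner_mul_radial_smul_le {g : EuclideanSpace ℝ ι → EuclideanSpace ℝ ι}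
    {C : ℝ} (hint : Integrable (fun ξ => ‖ξ‖ ^ 2 * w ‖ξ‖) μ) (hgC : ∀ᵐ ξ ∂μ, ‖g ξ‖ ≤ C) :
    ‖∫ ξ, (⟪g ξ, ξ⟫ * w ‖ξ‖) • ξ ∂μ‖ ≤ C * ∫ ξ, ‖ξ‖ ^ 2 * |w ‖ξ‖| ∂μ := by
  rw [← integral_const_mul]
  exact norm_integral_le_of_norm_le ((integrable_sq_norm_mul_abs_radial hint).const_mul C)
    (hgC.mono fun ξ h => norm_inner_mul_smul_le_of_norm_le h ξ _)

lemma continuousOn_integral_inner_mul_radial_smul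
    {g : ℝ → EuclideanSpace ℝ ι → EuclideanSpace ℝ ι} {S : Set ℝ} {C : ℝ}
    (hw : Measurable w) (hint : Integrable (fun ξ => ‖ξ‖ ^ 2 * w ‖ξ‖) μ)
    (hg : Continuous (Function.uncurry g)) (hgC : ∀ s ∈ S, ∀ᵐ ξ ∂μ, ‖g s ξ‖ ≤ C) :
    ContinuousOn (fun s => ∫ ξ, (⟪g s ξ, ξ⟫ * w ‖ξ‖) • ξ ∂μ) S := by
  refine continuousOn_of_dominated
    (fun s _ => aestronglyMeasurable_inner_mul_radial_smul hw
      (hg.comp (Continuous.prodMk_right s)).aestronglyMeasurable)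
    (fun s hs => (hgC s hs).mono fun ξ h => norm_inner_mul_smul_le_of_norm_le h ξ _)
    ((integrable_sq_norm_mul_abs_radial hint).const_mul C) (ae_of_all _ fun ξ => ?_)
  have : Continuous fun s => g s ξ := hg.comp (Continuous.prodMk_left ξ)
  exact Continuous.continuousOn (by fun_prop)

lemma card_mul_integral_sq_apply_mul_radial [DecidableEq ι]
    (hμ : ∀ e : EuclideanSpace ℝ ι ≃ₗᵢ[ℝ] EuclideanSpace ℝ ι, MeasurePreserving e μ μ)
    (hw : Measurable w) (hint : Integrable (fun ξ => ‖ξ‖ ^ 2 * w ‖ξ‖) μ) (i : ι) :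
    (Fintype.card ι : ℝ) * ∫ ξ, ξ i ^ 2 * w ‖ξ‖ ∂μ = ∫ ξ, ‖ξ‖ ^ 2 * w ‖ξ‖ ∂μ :=
  calc (Fintype.card ι : ℝ) * ∫ ξ, ξ i ^ 2 * w ‖ξ‖ ∂μ = ∑ k, ∫ ξ, ξ k ^ 2 * w ‖ξ‖ ∂μ := by
        simp [integral_sq_apply_mul_radial_eq hμ _ i]
    _ = ∫ ξ, ∑ k, ξ k ^ 2 * w ‖ξ‖ ∂μ := by
        refine (integral_finsetSum _ fun k _ => ?_).symm
        simpa only [sq] using integrable_apply_mul_apply_mul_radial hw hint k k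
    _ = ∫ ξ, ‖ξ‖ ^ 2 * w ‖ξ‖ ∂μ := by
        simp_rw [← Finset.sum_mul, EuclideanSpace.real_norm_sq_eq]

lemma card_smul_integral_inner_mul_radial_smul [DecidableEq ι]
    (hμ : ∀ e : EuclideanSpace ℝ ι ≃ₗᵢ[ℝ] EuclideanSpace ℝ ι, MeasurePreserving e μ μ)
    (hw : Measurable w) (hint : Integrable (fun ξ => ‖ξ‖ ^ 2 * w ‖ξ‖) μ)
    (a : EuclideanSpace ℝ ι) :
    (Fintype.card ι : ℝ) • ∫ ξ, (⟪a, ξ⟫ * w ‖ξ‖) • ξ ∂μ = (∫ ξ, ‖ξ‖ ^ 2 * w ‖ξ‖ ∂μ) • a := by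
  have hint_a := integrable_inner_mul_radial_smul hw hint aestronglyMeasurable_const
    (ae_of_all μ fun _ => le_refl ‖a‖)
  ext k
  have hk : (∫ ξ, (⟪a, ξ⟫ * w ‖ξ‖) • ξ ∂μ) k = ∑ i, a i * ∫ ξ, ξ i * ξ k * w ‖ξ‖ ∂μ :=
    calc (∫ ξ, (⟪a, ξ⟫ * w ‖ξ‖) • ξ ∂μ) k = ∫ ξ, ⟪a, ξ⟫ * w ‖ξ‖ * ξ k ∂μ :=
          ((EuclideanSpace.proj k).integral_comp_comm hint_a).symm
      _ = ∫ ξ, ∑ i, a i * (ξ i * ξ k * w ‖ξ‖) ∂μ := by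
          congr 1; ext ξ
          simp only [PiLp.inner_apply, RCLike.inner_apply, conj_trivial, Finset.sum_mul]
          exact Finset.sum_congr rfl fun i _ => by ring
      _ = ∑ i, a i * ∫ ξ, ξ i * ξ k * w ‖ξ‖ ∂μ := by
          rw [integral_finsetSum _ fun i _ =>
            (integrable_apply_mul_apply_mul_radial hw hint i k).const_mul (a i)]
          simp only [integral_const_mul]
  rw [PiLp.smul_apply, hk, Finset.sum_eq_single k
    (fun i _ hik => by rw [integral_apply_mul_apply_mul_radial_eq_zero hμ hik, mul_zero])
    (by simp), PiLp.smul_apply, ← card_mul_integral_sq_apply_mul_radial hμ hw hint k]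
  simp only [smul_eq_mul, sq]
  ring

end RadialMoments

noncomputable def ballAverage (ι : Type*) [Fintype ι] (r : ℝ) : Measure (EuclideanSpace ℝ ι) :=
  (volume.restrict (ball (0 : EuclideanSpace ℝ ι) r) Set.univ)⁻¹ • volume.restrict (ball 0 r)

section BallAverage

variable {ι : Type*} [Fintype ι] {r : ℝ}

lemma setAverage_ball_eq_integral_ballAverage {F : Type*} [NormedAddCommGroup F]
    [NormedSpace ℝ F] (g : EuclideanSpace ℝ ι → F) :
    ⨍ ξ in ball (0 : EuclideanSpace ℝ ι) r, g ξ = ∫ ξ, g ξ ∂ballAverage ι r :=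
  average_eq' _ _

lemma measurePreserving_ballAverage (e : EuclideanSpace ℝ ι ≃ₗᵢ[ℝ] EuclideanSpace ℝ ι) :
    MeasurePreserving e (ballAverage ι r) (ballAverage ι r) := by
  have hball : e ⁻¹' ball 0 r = ball 0 r := by simp
  have h := e.measurePreserving.restrict_preimage (measurableSet_ball (x := 0) (ε := r))
  rw [hball] at h
  exact h.smul_measure _

lemma ae_ballAverage_mem_ball : ∀ᵐ ξ ∂ballAverage ι r, ξ ∈ ball 0 r :=
  Measure.ae_smul_measure (ae_restrict_mem measurableSet_ball) _

lemma integral_ballAverage_sq_norm_mul_div (f : ℝ → ℝ) :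
    ∫ ξ, ‖ξ‖ ^ 2 * (f ‖ξ‖ / ‖ξ‖) ∂ballAverage ι r =
      ⨍ ξ in ball (0 : EuclideanSpace ℝ ι) r, ‖ξ‖ * f ‖ξ‖ := by
  rw [setAverage_ball_eq_integral_ballAverage]
  congr 1; ext ξ
  rcases eq_or_ne ‖ξ‖ 0 with h | h
  · simp [h]
  · field_simp

lemma integral_ballAverage_sq_norm_mul_abs_div {f : ℝ → ℝ} (hf : ∀ ρ ∈ Set.Ioo 0 r, 0 ≤ f ρ) :
    ∫ ξ, ‖ξ‖ ^ 2 * |f ‖ξ‖ / ‖ξ‖| ∂ballAverage ι r =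
      ⨍ ξ in ball (0 : EuclideanSpace ℝ ι) r, ‖ξ‖ * f ‖ξ‖ := by
  rw [← integral_ballAverage_sq_norm_mul_div]
  refine integral_congr_ae (ae_ballAverage_mem_ball.mono fun ξ hξ => ?_)
  rcases eq_or_ne ‖ξ‖ 0 with h | h
  · simp [h]
  · dsimp only
    rw [abs_of_nonneg (div_nonneg (hf _ ⟨(norm_nonneg ξ).lt_of_ne' h, mem_ball_zero_iff.mp hξ⟩)
      (norm_nonneg ξ))]

end BallAverage

section TgradOp

variable {d : ℕ} {r : ℝ} {f : ℝ → ℝ}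

lemma TgradOp_eq_integral_ballAverage (v : EuclideanSpace ℝ (Fin d) → ℝ)
    (x : EuclideanSpace ℝ (Fin d)) :
    TgradOp d r f v x = r⁻¹ • ∫ s in (0 : ℝ)..1,
      ∫ ξ, (⟪gradient v (x + s • ξ), ξ⟫ * (f ‖ξ‖ / ‖ξ‖)) • ξ ∂ballAverage (Fin d) r := by
  simp only [TgradOp, setAverage_ball_eq_integral_ballAverage, mul_div_assoc]

lemma integrable_ballAverage_sq_norm_mul_div (hd : 1 ≤ d) (hr : 0 < r)
    (hfnorm : ⨍ ξ in ball (0 : EuclideanSpace ℝ (Fin d)) r, ‖ξ‖ * f ‖ξ‖ = d * r) :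
    Integrable (fun ξ => ‖ξ‖ ^ 2 * (f ‖ξ‖ / ‖ξ‖)) (ballAverage (Fin d) r) :=
  Integrable.of_integral_ne_zero <|
    ((integral_ballAverage_sq_norm_mul_div f).trans hfnorm).trans_ne (by positivity)

lemma integral_ballAverage_inner_mul_div_smul (hd : 1 ≤ d) (hr : 0 < r) (hf : Measurable f)
    (hfnorm : ⨍ ξ in ball (0 : EuclideanSpace ℝ (Fin d)) r, ‖ξ‖ * f ‖ξ‖ = d * r)
    (a : EuclideanSpace ℝ (Fin d)) :
    ∫ ξ, (⟪a, ξ⟫ * (f ‖ξ‖ / ‖ξ‖)) • ξ ∂ballAverage (Fin d) r = r • a := by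
  have h := card_smul_integral_inner_mul_radial_smul (w := fun ρ => f ρ / ρ)
    measurePreserving_ballAverage (hf.div measurable_id)
    (integrable_ballAverage_sq_norm_mul_div hd hr hfnorm) a
  rw [integral_ballAverage_sq_norm_mul_div, hfnorm, Fintype.card_fin, mul_smul] at h
  exact smul_right_injective _ (by positivity) h

lemma norm_integral_ballAverage_inner_mul_div_smul_sub_le (hd : 1 ≤ d) (hr : 0 < r)
    (hf : Measurable f) (hf0 : ∀ ρ ∈ Set.Ioo 0 r, 0 ≤ f ρ)
    (hfnorm : ⨍ ξ in ball (0 : EuclideanSpace ℝ (Fin d)) r, ‖ξ‖ * f ‖ξ‖ = d * r)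
    {g : EuclideanSpace ℝ (Fin d) → EuclideanSpace ℝ (Fin d)}
    (hg : AEStronglyMeasurable g (ballAverage (Fin d) r)) {a : EuclideanSpace ℝ (Fin d)}
    {κ : ℝ} (hga : ∀ᵐ ξ ∂ballAverage (Fin d) r, ‖g ξ - a‖ ≤ κ) :
    ‖∫ ξ, (⟪g ξ, ξ⟫ * (f ‖ξ‖ / ‖ξ‖)) • ξ ∂ballAverage (Fin d) r - r • a‖ ≤ r * (d * κ) := by
  have hw : Measurable fun ρ => f ρ / ρ := hf.div measurable_id
  have hint := integrable_ballAverage_sq_norm_mul_div hd hr hfnorm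
  rw [← integral_ballAverage_inner_mul_div_smul hd hr hf hfnorm a, ← integral_sub
    (integrable_inner_mul_radial_smul (C := ‖a‖ + κ) hw hint hg
      (hga.mono fun ξ h => (norm_le_norm_add_norm_sub' _ a).trans (by gcongr)))
    (integrable_inner_mul_radial_smul hw hint aestronglyMeasurable_const
      (ae_of_all _ fun _ => le_refl ‖a‖))]
  simp_rw [← sub_smul, ← sub_mul, ← inner_sub_left]
  refine (norm_integral_inner_mul_radial_smul_le (w := fun ρ => f ρ / ρ) (g := fun ξ => g ξ - a)
    hint hga).trans_eq ?_
  rw [integral_ballAverage_sq_norm_mul_abs_div hf0, hfnorm]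
  ring

lemma norm_TgradOp_sub_le (hd : 1 ≤ d) (hr : 0 < r) (hf : Measurable f)
    (hf0 : ∀ ρ ∈ Set.Ioo 0 r, 0 ≤ f ρ)
    (hfnorm : ⨍ ξ in ball (0 : EuclideanSpace ℝ (Fin d)) r, ‖ξ‖ * f ‖ξ‖ = d * r)
    {v : EuclideanSpace ℝ (Fin d) → ℝ} (hv : Continuous (gradient v))
    {x : EuclideanSpace ℝ (Fin d)} {κ : ℝ}
    (hκ : ∀ y ∈ ball x r, ‖gradient v y - gradient v x‖ ≤ κ) :
    ‖TgradOp d r f v x - gradient v x‖ ≤ d * κ := by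
  have hmem : ∀ s ∈ Set.Icc (0 : ℝ) 1, ∀ᵐ ξ ∂ballAverage (Fin d) r, x + s • ξ ∈ ball x r :=
    fun s hs => ae_ballAverage_mem_ball.mono fun ξ hξ => add_smul_mem_ball hξ hs
  have hcont := continuousOn_integral_inner_mul_radial_smul
    (g := fun s ξ => gradient v (x + s • ξ)) (C := ‖gradient v x‖ + κ) (hf.div measurable_id)
    (integrable_ballAverage_sq_norm_mul_div hd hr hfnorm) (by fun_prop)
    fun s hs => (hmem s hs).mono fun ξ hξ =>
      (norm_le_norm_add_norm_sub' _ (gradient v x)).trans (by gcongr; exact hκ _ hξ)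
  rw [TgradOp_eq_integral_ballAverage]
  refine norm_inv_smul_intervalIntegral_sub_le hr (hcont.intervalIntegrable_of_Icc zero_le_one)
    fun s hs => norm_integral_ballAverage_inner_mul_div_smul_sub_le hd hr hf hf0 hfnorm
      (by fun_prop) ((hmem s hs).mono fun ξ hξ => hκ _ hξ)

end TgradOp

theorem TgradOp_tendsto_gradient_general (d : ℕ) (hd : 1 ≤ d)
    (F : ℝ → ℝ → ℝ) (hFmeas : ∀ r > 0, Measurable (F r))
    (hFnonneg : ∀ r > 0, ∀ ρ ∈ Set.Ioo 0 r, 0 ≤ F r ρ)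
    (hFnorm : ∀ r > 0,
      ⨍ ξ in ball (0 : EuclideanSpace ℝ (Fin d)) r, ‖ξ‖ * F r ‖ξ‖ = d * r)
    (v : EuclideanSpace ℝ (Fin d) → ℝ)
    (hv : ContDiff ℝ 1 v)
    (x : EuclideanSpace ℝ (Fin d)) :
    Tendsto (fun r => TgradOp d r (F r) v x) (nhdsWithin 0 (Set.Ioi 0))
      (nhds (gradient v x)) := by
  have hgrad : Continuous (gradient v) :=
    (InnerProductSpace.toDual ℝ _).symm.continuous.comp (hv.continuous_fderiv one_ne_zero)
  rw [Metric.tendsto_nhdsWithin_nhds]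
  intro ε hε
  obtain ⟨δ, hδ, hδε⟩ :=
    Metric.continuousAt_iff.mp hgrad.continuousAt (ε / (2 * d)) (by positivity)
  refine ⟨δ, hδ, fun r (hr : 0 < r) hrδ => ?_⟩
  rw [Real.dist_0_eq_abs, abs_of_pos hr] at hrδ
  rw [dist_eq_norm]
  calc ‖TgradOp d r (F r) v x - gradient v x‖ ≤ d * (ε / (2 * d)) :=
        norm_TgradOp_sub_le hd hr (hFmeas r hr) (hFnonneg r hr) (hFnorm r hr) hgrad
          fun y hy => (hδε ((mem_ball.mp hy).trans hrδ)).le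
    _ < ε := by field_simp; linarith

theorem TgradOp_tendsto_gradient (d : ℕ) (hd : 1 ≤ d)
    (F : ℝ → ℝ → ℝ) (hFmeas : ∀ r > 0, Measurable (F r))
    (hFnonneg : ∀ r > 0, ∀ ρ ∈ Set.Ioo 0 r, 0 ≤ F r ρ)
    (hFnorm : ∀ r > 0,
      ⨍ ξ in ball (0 : EuclideanSpace ℝ (Fin d)) r, ‖ξ‖ * F r ‖ξ‖ = d * r)
    (v : EuclideanSpace ℝ (Fin d) → ℝ)
    (hv : ContDiff ℝ 1 v) (hvb : ∃ C, ∀ y, |v y| ≤ C)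
    (x : EuclideanSpace ℝ (Fin d)) :
    Tendsto (fun r => TgradOp d r (F r) v x) (nhdsWithin 0 (Set.Ioi 0))
      (nhds (gradient v x)) :=
  TgradOp_tendsto_gradient_general d hd F hFmeas hFnonneg hFnorm v hv x
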